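/- arXiv:2312.12603 — 3 statements merged into one kernel-verified Lean document; each statement's English description precedes it below -/
import Mathlib

section
/- For C, k > 0 and natural numbers j < n with both positive, there exists θ* ∈ ℝ with cos(n θ*) < 0 and cos(j θ*) < 0. -/
open Real

lemma exists_cos_neg_in_long_interval (a b : ℝ) (h : a + π < b) :
    ∃ x, a < x ∧ x < b ∧ Real.cos x < 0 := by
  have hpi := Real.pi_pos
  set d : ℝ := min ((b - a - π) / 2) (π / 2) with hd
  have hd0 : 0 < d := lt_min (by linarith) (by linarith)
  have hdle : d ≤ (b - a - π) / 2 := min_le_left _ _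
  have hdle2 : d ≤ π / 2 := min_le_right _ _
  set x₁ : ℝ := a + d / 2 with hx1
  set x₂ : ℝ := a + d with hx2
  have hx1a : a < x₁ := by simp [hx1]; linarith
  have hx2a : a < x₂ := by simp [hx2]; linarith
  have hx1b : x₁ + π < b := by simp [hx1]; linarith
  have hx2b : x₂ + π < b := by simp [hx2]; linarith
  have hdiff : x₂ - x₁ = d / 2 := by simp [hx1, hx2]; ring
  -- handle one point: if cos nonzero, we get a witness
  have key : ∀ x : ℝ, a < x → x + π < b → Real.cos x ≠ 0 →
      ∃ y, a < y ∧ y < b ∧ Real.cos y < 0 := by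
    intro x hax hxb hne
    rcases lt_or_gt_of_ne hne with hlt | hgt
    · exact ⟨x, hax, by linarith, hlt⟩
    · refine ⟨x + π, by linarith, by linarith, ?_⟩
      rw [Real.cos_add_pi]
      linarith
  by_cases h1 : Real.cos x₁ = 0
  · by_cases h2 : Real.cos x₂ = 0
    · exfalso
      rw [Real.cos_eq_zero_iff] at h1 h2
      obtain ⟨k₁, hk₁⟩ := h1
      obtain ⟨k₂, hk₂⟩ := h2
      have : ((k₂ : ℝ) - k₁) * π = d / 2 := by
        rw [← hdiff, hk₁, hk₂]; ring
      have h0 : (0 : ℝ) < ((k₂ : ℝ) - k₁) * π := by rw [this]; linarith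
      have h1' : ((k₂ : ℝ) - k₁) * π < π := by rw [this]; linarith
      have hk0 : (0 : ℝ) < (k₂ : ℝ) - k₁ := by
        by_contra hh
        push_neg at hh
        nlinarith
      have hk1 : ((k₂ : ℝ) - k₁) < 1 := by
        by_contra hh
        push_neg at hh
        nlinarith
      have : (0 : ℤ) < k₂ - k₁ := by exact_mod_cast (by push_cast; linarith : (0:ℝ) < ((k₂ - k₁ : ℤ) : ℝ))
      have : (k₂ - k₁ : ℤ) < 1 := by exact_mod_cast (by push_cast; linarith : ((k₂ - k₁ : ℤ) : ℝ) < 1)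
      omega
    · exact key x₂ hx2a hx2b h2
  · exact key x₁ hx1a hx1b h1

theorem exists_theta_both_cos_neg (C k : ℝ) (hC : 0 < C) (hk : 0 < k)
    (n j : ℕ) (hj : 0 < j) (hjn : j < n) :
    ∃ θ : ℝ, Real.cos (n * θ) < 0 ∧ Real.cos (j * θ) < 0 := by
  have hpi := Real.pi_pos
  have hn0 : (0 : ℝ) < n := by exact_mod_cast (hj.trans hjn)
  have hj0 : (0 : ℝ) < j := by exact_mod_cast hj
  have hjn' : (j : ℝ) < n := by exact_mod_cast hjn
  set a : ℝ := n * π / (2 * j) with ha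
  set b : ℝ := 3 * n * π / (2 * j) with hb
  have h2j : (0 : ℝ) < 2 * j := by linarith
  have hlong : a + π < b := by
    rw [ha, hb, div_add' _ _ _ (ne_of_gt h2j), div_lt_div_iff₀ h2j h2j]
    nlinarith [mul_pos (mul_pos hpi hj0) (sub_pos.mpr hjn')]
  obtain ⟨x, hax, hxb, hcos⟩ := exists_cos_neg_in_long_interval a b hlong
  have h1 : (n : ℝ) * π < x * (2 * j) := (div_lt_iff₀ h2j).mp hax
  have h2 : x * (2 * j) < 3 * n * π := (lt_div_iff₀ h2j).mp hxb
  refine ⟨x / n, ?_, ?_⟩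
  · rwa [mul_div_cancel₀ _ (ne_of_gt hn0)]
  · apply Real.cos_neg_of_pi_div_two_lt_of_lt
    · rw [← mul_div_assoc, lt_div_iff₀ hn0]
      nlinarith
    · rw [← mul_div_assoc, div_lt_iff₀ hn0]
      nlinarith
end

section
/- For real C with |C| > 1/2 and k > 0, the set {(x,y) : x^2 + y^2 - 2C(x^2 - y^2 + x) = k} is unbounded. -/
theorem hyperbola_case_symm (C k : ℝ) (hC : 1/2 < |C|) (hk : 0 < k) :
    ¬ Bornology.IsBounded
      {p : ℝ × ℝ | p.1 ^ 2 + p.2 ^ 2 - 2 * C * (p.1 ^ 2 - p.2 ^ 2 + p.1) = k} := by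
  intro h
  obtain ⟨r, hr⟩ := isBounded_iff_forall_norm_le.mp h
  rcases lt_abs.mp hC with hC1 | hC2
  · -- C > 1/2
    set x : ℝ := |r| + 1 with hx
    have hxpos : 0 < x := by positivity
    have hb : (0:ℝ) < 1 + 2 * C := by linarith
    have hE : 0 ≤ (k + (2*C - 1) * x ^ 2 + 2 * C * x) / (1 + 2*C) := by
      apply div_nonneg _ hb.le
      nlinarith
    set y : ℝ := Real.sqrt ((k + (2*C - 1) * x ^ 2 + 2 * C * x) / (1 + 2*C)) with hy
    have hy2 : y ^ 2 = (k + (2*C - 1) * x ^ 2 + 2 * C * x) / (1 + 2*C) := by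
      rw [hy, Real.sq_sqrt hE]
    have hmem : (x, y) ∈ {p : ℝ × ℝ | p.1 ^ 2 + p.2 ^ 2 - 2 * C * (p.1 ^ 2 - p.2 ^ 2 + p.1) = k} := by
      simp only [Set.mem_setOf_eq]
      field_simp at hy2 ⊢
      nlinarith [hy2]
    have := hr _ hmem
    have h1 : ‖((x, y) : ℝ × ℝ).1‖ ≤ ‖((x, y) : ℝ × ℝ)‖ := norm_fst_le _
    simp only [Real.norm_eq_abs] at h1
    have : |x| ≤ r := le_trans h1 this
    rw [abs_of_pos hxpos] at this
    have := le_abs_self r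
    linarith
  · -- C < -1/2, from 1/2 < -C
    have hCneg : C < -(1/2) := by linarith
    set y : ℝ := |r| + 1 with hy
    have hypos : 0 < y := by positivity
    have ha : (0:ℝ) < 1 - 2 * C := by linarith
    have hD : 0 ≤ 4*C^2 + 4*(1 - 2*C)*(k - (1 + 2*C)*y^2) := by
      have h1 : (0:ℝ) < k - (1 + 2*C)*y^2 := by nlinarith [pow_pos hypos 2]
      nlinarith [sq_nonneg C, mul_pos ha h1]
    set s : ℝ := Real.sqrt (4*C^2 + 4*(1 - 2*C)*(k - (1 + 2*C)*y^2)) with hs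
    have hs2 : s ^ 2 = 4*C^2 + 4*(1 - 2*C)*(k - (1 + 2*C)*y^2) := by
      rw [hs, Real.sq_sqrt hD]
    set x : ℝ := (2*C + s) / (2*(1 - 2*C)) with hx
    have hmem : (x, y) ∈ {p : ℝ × ℝ | p.1 ^ 2 + p.2 ^ 2 - 2 * C * (p.1 ^ 2 - p.2 ^ 2 + p.1) = k} := by
      simp only [Set.mem_setOf_eq]
      have h4 : (4*(1 - 2*C)^2) * ((1 - 2*C)*x^2 - 2*C*x) = (1 - 2*C)*(s^2 - 4*C^2) := by
        rw [hx]; field_simp; ring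
      have h5 : (4*(1 - 2*C)^2) * ((1 - 2*C)*x^2 - 2*C*x)
          = (4*(1 - 2*C)^2) * (k - (1 + 2*C)*y^2) := by rw [h4, hs2]; ring
      have key := mul_left_cancel₀ (by positivity : (4*(1 - 2*C)^2 : ℝ) ≠ 0) h5
      linear_combination key
    have := hr _ hmem
    have h1 : ‖((x, y) : ℝ × ℝ).2‖ ≤ ‖((x, y) : ℝ × ℝ)‖ := norm_snd_le _
    simp only [Real.norm_eq_abs] at h1
    have : |y| ≤ r := le_trans h1 this
    rw [abs_of_pos hypos] at this
    have := le_abs_self r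
    linarith
end

section
/- Let C, k > 0 and n ≥ 3 a natural number. The polynomial g(r) = C r^n + r - r^2 + k satisfies: there exists r > 0 with g(r) < 0 if and only if C < max over r ∈ (0,∞) of (r^2 - r - k)/r^n, and this maximum is attained at r* = ((n-1) + √((n-1)^2 + 4nk(n-2)))/(2(n-2)) and is strictly positive. -/
/-!
`g(r) < 0` at some `r > 0` means exactly `C < R(r)`, so everything reduces to locating the
maximum of `R` on `(0, ∞)`. The derivative of `R` is `q(r) / r^(n+1)` with
`q(r) = -(n-2) r² + (n-1) r + n k`, a downward parabola with `q(0) > 0`; hence `R` increases up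
to the positive root `r*` of `q` and decreases afterwards. Substituting `q(r*) = 0` gives
`(n-2)(r*² - r* - k) = r* + 2k > 0`, so `R(r*) > 0`.
-/

open Set

theorem isMaxOn_Ioi_of_hasDerivAt {f f' : ℝ → ℝ} {a c : ℝ} (hac : a < c)
    (hf : ∀ x ∈ Ioi a, HasDerivAt f (f' x) x)
    (hf'_nonneg : ∀ x ∈ Ioo a c, 0 ≤ f' x) (hf'_nonpos : ∀ x ∈ Ioi c, f' x ≤ 0) :
    IsMaxOn f (Ioi a) c := by
  have hcont : ContinuousOn f (Ioi a) := fun x hx => (hf x hx).continuousAt.continuousWithinAt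
  have hmono : MonotoneOn f (Ioc a c) := by
    refine monotoneOn_of_hasDerivWithinAt_nonneg (f' := f') (convex_Ioc a c)
      (hcont.mono Ioc_subset_Ioi_self) (fun x hx => ?_) (fun x hx => ?_)
    all_goals rw [interior_Ioc] at hx
    · exact (hf x hx.1).hasDerivWithinAt
    · exact hf'_nonneg x hx
  have hanti : AntitoneOn f (Ici c) := by
    refine antitoneOn_of_hasDerivWithinAt_nonpos (f' := f') (convex_Ici c)
      (hcont.mono (Ici_subset_Ioi.2 hac)) (fun x hx => ?_) (fun x hx => ?_)
    all_goals rw [interior_Ici] at hx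
    · exact (hf x (hac.trans hx)).hasDerivWithinAt
    · exact hf'_nonpos x hx
  intro x (hx : a < x)
  rcases le_total x c with hxc | hcx
  · exact hmono ⟨hx, hxc⟩ ⟨hac, le_rfl⟩ hxc
  · exact hanti self_mem_Ici hcx hcx

noncomputable def thresholdRatio (k : ℝ) (n : ℕ) (r : ℝ) : ℝ := (r ^ 2 - r - k) / r ^ n

theorem hasDerivAt_thresholdRatio (k : ℝ) (n : ℕ) {r : ℝ} (hr : r ≠ 0) :
    HasDerivAt (thresholdRatio k n)
      ((-(n - 2) * r ^ 2 + (n - 1) * r + n * k) / r ^ (n + 1)) r := by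
  have hnum : HasDerivAt (fun x : ℝ => x ^ 2 - x - k) (2 * r - 1) r := by
    simpa using ((hasDerivAt_pow 2 r).sub (hasDerivAt_id r)).sub_const k
  refine (hnum.div (hasDerivAt_pow n r) (pow_ne_zero n hr)).congr_deriv ?_
  rcases n with _ | m
  · field_simp; ring
  · simp only [Nat.add_sub_cancel, pow_succ]
    push_cast
    field_simp
    ring

theorem lt_thresholdRatio_iff {C k r : ℝ} {n : ℕ} (hr : 0 < r) :
    C < thresholdRatio k n r ↔ C * r ^ n + r - r ^ 2 + k < 0 := by
  rw [thresholdRatio, lt_div_iff₀ (pow_pos hr n)]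
  constructor <;> intro h <;> linarith

/-- The positive root of `(a - 2) r ^ 2 - (a - 1) r - a k`, where the derivative of
`thresholdRatio k n` changes sign for `a = n`. -/
noncomputable def criticalRadius (a k : ℝ) : ℝ :=
  ((a - 1) + √((a - 1) ^ 2 + 4 * a * k * (a - 2))) / (2 * (a - 2))

section criticalRadius

variable {a k : ℝ}

theorem criticalRadius_pos (ha : 2 < a) : 0 < criticalRadius a k :=
  div_pos (add_pos_of_pos_of_nonneg (by linarith) (Real.sqrt_nonneg _)) (by linarith)

theorem criticalRadius_isRoot (ha : 2 < a) (hk : 0 ≤ k) :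
    (a - 2) * criticalRadius a k ^ 2 - (a - 1) * criticalRadius a k - a * k = 0 := by
  have hs : √((a - 1) ^ 2 + 4 * a * k * (a - 2)) ^ 2 = (a - 1) ^ 2 + 4 * a * k * (a - 2) :=
    Real.sq_sqrt (by positivity)
  have ha2 : a - 2 ≠ 0 := by linarith
  rw [criticalRadius]
  generalize √((a - 1) ^ 2 + 4 * a * k * (a - 2)) = s at hs ⊢
  field_simp
  linear_combination hs

theorem sub_one_lt_mul_criticalRadius (ha : 2 < a) (hk : 0 < k) :
    a - 1 < (a - 2) * criticalRadius a k := by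
  have hlt : a - 1 < √((a - 1) ^ 2 + 4 * a * k * (a - 2)) := by
    apply Real.lt_sqrt_of_sq_lt
    nlinarith [mul_pos (mul_pos (by linarith : (0 : ℝ) < a) hk) (by linarith : (0 : ℝ) < a - 2)]
  have ha2 : a - 2 ≠ 0 := by linarith
  rw [criticalRadius, mul_div_assoc', mul_comm 2, ← div_div, mul_div_cancel_left₀ _ ha2]
  linarith

/-- Factoring out the root `criticalRadius a k` from the quadratic; for `0 < r` the second
factor is positive, so the sign is that of `criticalRadius a k - r`. -/
theorem neg_quadratic_eq_mul (ha : 2 < a) (hk : 0 ≤ k) (r : ℝ) :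
    -(a - 2) * r ^ 2 + (a - 1) * r + a * k =
      (criticalRadius a k - r) * ((a - 2) * (r + criticalRadius a k) - (a - 1)) := by
  linear_combination -criticalRadius_isRoot ha hk

theorem neg_quadratic_pos (ha : 2 < a) (hk : 0 < k) {r : ℝ} (hr : 0 < r)
    (hrc : r < criticalRadius a k) : 0 < -(a - 2) * r ^ 2 + (a - 1) * r + a * k := by
  rw [neg_quadratic_eq_mul ha hk.le]
  refine mul_pos (sub_pos.2 hrc) ?_
  nlinarith [sub_one_lt_mul_criticalRadius ha hk]

theorem neg_quadratic_neg (ha : 2 < a) (hk : 0 < k) {r : ℝ}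
    (hcr : criticalRadius a k < r) : -(a - 2) * r ^ 2 + (a - 1) * r + a * k < 0 := by
  rw [neg_quadratic_eq_mul ha hk.le]
  refine mul_neg_of_neg_of_pos (sub_neg.2 hcr) ?_
  nlinarith [sub_one_lt_mul_criticalRadius ha hk, criticalRadius_pos (k := k) ha]

end criticalRadius

section thresholdRatio

variable {k : ℝ} {n : ℕ}

theorem isMaxOn_thresholdRatio (hk : 0 < k) (hn : 3 ≤ n) :
    IsMaxOn (thresholdRatio k n) (Ioi 0) (criticalRadius n k) := by
  have ha : (2 : ℝ) < n := by exact_mod_cast hn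
  refine isMaxOn_Ioi_of_hasDerivAt (criticalRadius_pos ha)
    (fun r hr => hasDerivAt_thresholdRatio k n (ne_of_gt hr)) (fun r hr => ?_) (fun r hr => ?_)
  · exact div_nonneg (neg_quadratic_pos ha hk hr.1 hr.2).le (pow_nonneg hr.1.le _)
  · have hr0 : 0 < r := (criticalRadius_pos ha).trans hr
    exact div_nonpos_of_nonpos_of_nonneg (neg_quadratic_neg ha hk hr).le (pow_nonneg hr0.le _)

theorem thresholdRatio_criticalRadius_pos (hk : 0 < k) (hn : 3 ≤ n) :
    0 < thresholdRatio k n (criticalRadius n k) := by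
  have ha : (2 : ℝ) < n := by exact_mod_cast hn
  set c := criticalRadius n k
  have hc : 0 < c := criticalRadius_pos ha
  have hprod : ((n : ℝ) - 2) * (c ^ 2 - c - k) = c + 2 * k := by
    linear_combination criticalRadius_isRoot ha hk.le
  have hnum : 0 < c ^ 2 - c - k :=
    pos_of_mul_pos_right (hprod ▸ by linarith : 0 < ((n : ℝ) - 2) * (c ^ 2 - c - k))
      (by linarith)
  exact div_pos hnum (pow_pos hc n)

end thresholdRatio

theorem gamma_n1_threshold_general (C k : ℝ) (hk : 0 < k)
    (n : ℕ) (hn : 3 ≤ n) :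
    let R : ℝ → ℝ := fun r => (r ^ 2 - r - k) / r ^ n
    let rstar : ℝ := ((n - 1) + Real.sqrt ((n - 1) ^ 2 + 4 * n * k * (n - 2))) /
      (2 * (n - 2))
    IsMaxOn R (Set.Ioi 0) rstar ∧ 0 < R rstar ∧
    ((∃ r : ℝ, 0 < r ∧ C * r ^ n + r - r ^ 2 + k < 0) ↔ C < R rstar) := by
  intro R rstar
  have hmax : IsMaxOn (thresholdRatio k n) (Ioi 0) (criticalRadius n k) :=
    isMaxOn_thresholdRatio hk hn
  have hrstar : 0 < criticalRadius n k := criticalRadius_pos (by exact_mod_cast hn)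
  refine ⟨hmax, thresholdRatio_criticalRadius_pos hk hn, ⟨fun ⟨r, hr, hneg⟩ => ?_, fun h => ?_⟩⟩
  · exact ((lt_thresholdRatio_iff hr).2 hneg).trans_le (hmax hr)
  · exact ⟨_, hrstar, (lt_thresholdRatio_iff hrstar).1 h⟩

theorem gamma_n1_threshold (C k : ℝ) (hC : 0 < C) (hk : 0 < k)
    (n : ℕ) (hn : 3 ≤ n) :
    let R : ℝ → ℝ := fun r => (r ^ 2 - r - k) / r ^ n
    let rstar : ℝ := ((n - 1) + Real.sqrt ((n - 1) ^ 2 + 4 * n * k * (n - 2))) /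
      (2 * (n - 2))
    IsMaxOn R (Set.Ioi 0) rstar ∧ 0 < R rstar ∧
    ((∃ r : ℝ, 0 < r ∧ C * r ^ n + r - r ^ 2 + k < 0) ↔ C < R rstar) :=
  gamma_n1_threshold_general C k hk n hn
end
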